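/- Fermionic $(\mathfrak{gl}_M,\mathfrak{gl}_N)$-duality with regular singularities: in the Grassmann algebra generated by odd elements $\psi^a_i, \pi^a_i$ ($1\le a\le M$, $1\le i\le N$), for distinct $z_1,\dots,z_N$ and distinct $\lambda_1,\dots,\lambda_M$, the following identity holds: $\det\Big((\lambda - \lambda_a)\delta_{ab} - \sum_{i=1}^N \frac{\pi^a_i\psi^b_i}{z-z_i}\Big)_{a,b=1}^M \cdot \det\Big((z - z_i)\delta_{ij} - \sum_{a=1}^M \frac{\psi^a_i\pi^a_j}{\lambda - \lambda_a}\Big)_{i,j=1}^N = \prod_{i=1}^N (z - z_i)\cdot\prod_{a=1}^M (\lambda - \lambda_a)$, as rational functions of $z$ and $\lambda$ (equivalently, as an identity in the Grassmann algebra after multiplying out at generic $z, \lambda$). -/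

import Mathlib

set_option synthInstance.maxHeartbeats 1000000
set_option maxHeartbeats 2000000
/-- Column-ordered determinant (the entries appearing below are even, hence commute). -/
def ndet {A : Type*} [Ring A] {n : ℕ} (M : Matrix (Fin n) (Fin n) A) : A :=
  ∑ σ : Equiv.Perm (Fin n), ((Equiv.Perm.sign σ : ℤ) • (List.ofFn fun j => M (σ j) j).prod)

/-- The field of rational functions `ℂ(z, λ)`: `X 0 = z`, `X 1 = λ`. -/
abbrev K15 : Type := FractionRing (MvPolynomial (Fin 2) ℂ)

noncomputable def z15 : K15 := algebraMap (MvPolynomial (Fin 2) ℂ) K15 (MvPolynomial.X 0)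
noncomputable def l15 : K15 := algebraMap (MvPolynomial (Fin 2) ℂ) K15 (MvPolynomial.X 1)
noncomputable def c15 (w : ℂ) : K15 :=
  algebraMap (MvPolynomial (Fin 2) ℂ) K15 (MvPolynomial.C w)

/-- The Grassmann algebra over `ℂ(z, λ)` on odd generators `ψ^a_i, π^a_i`. -/
abbrev Gr (M N : ℕ) : Type := ExteriorAlgebra K15 ((Bool × Fin M × Fin N) →₀ K15)

/-- The odd generator `ψ^a_i`. -/
noncomputable def ψg (M N : ℕ) (a : Fin M) (i : Fin N) : Gr M N :=
  ExteriorAlgebra.ι K15 (Finsupp.single (false, a, i) 1)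

/-- The odd generator `π^a_i`. -/
noncomputable def πg (M N : ℕ) (a : Fin M) (i : Fin N) : Gr M N :=
  ExteriorAlgebra.ι K15 (Finsupp.single (true, a, i) 1)

/-!
Write the first matrix as `diag(λ - λ_a) (1 - X Y)` and the second as `diag(z - z_i) (1 - Y X)`,
where `X_{ai} = π^a_i / (λ - λ_a)` and `Y_{ia} = ψ^a_i / (z - z_i)` are odd. The theorem reduces to
`det (1 - X Y) * det (1 - Y X) = 1` for matrices with odd entries in a supercommutative ring,
proved by induction on the number of columns of `X`. Split `X = (X₁ | x)` and `Y = (Y₁ ; y)` along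
the last column and row; `s = y x` is even and nilpotent, so `1 - s` has an even inverse `α`. A Schur
complement gives `det (1 - Y X) = (1 - s) det (1 - Y₁ X₂)` with `X₂ = X₁ + α x y X₁`, and since
`(x y)² = s x y` one has `(1 + α x y) (1 - X Y) = 1 - X₂ Y₁`; the rank-one case of the identity
itself gives `det (1 + α x y) = 1 - s`. The rank-one case comes from the same induction with `X` and
`Y` swapped, starting from `(1 - x y) (1 - y x) = (1 + y x) (1 - y x) = 1 - (y x)² = 1`.
-/

open Matrix CliffordAlgebra

lemma one_add_smul_mul_one_sub_add {R S : Type*} [CommRing R] [Ring S] [Algebra R S]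
    {α s : R} {b c : S} (hc : c * c = s • c) (hα : α * (1 - s) = 1) :
    (1 + α • c) * (1 - (b + c)) = 1 - (b + α • (c * b)) := by
  have hα' : α - α * s - 1 = 0 := by linear_combination hα
  calc (1 + α • c) * (1 - (b + c)) = 1 - (b + α • (c * b)) + (α - α * s - 1) • c := by
        simp only [add_mul, mul_sub, mul_add, one_mul, mul_one, smul_mul_assoc, hc, smul_smul]
        module
    _ = 1 - (b + α • (c * b)) := by rw [hα', zero_smul, add_zero]

lemma det_fromBlocks_mul_eq_det_sub_smul {R m o : Type*} [CommRing R] [Fintype m] [DecidableEq m]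
    [Fintype o] [DecidableEq o] [Unique o] (A : Matrix m m R) (B : Matrix m o R)
    (C : Matrix o m R) (D : Matrix o o R) {α : R} (hα : α * D default default = 1) :
    (fromBlocks A B C D).det * α = (A - α • (B * C)).det := by
  let _ : Invertible D := invertibleOfLeftInverse D (α • 1) <| by
    ext i j
    rw [Subsingleton.elim i default, Subsingleton.elim j default]
    simp [hα]
  rw [det_fromBlocks₂₂, show ⅟D = α • (1 : Matrix o o R) from rfl, Matrix.mul_smul, Matrix.mul_one,
    Matrix.smul_mul, det_unique D, mul_right_comm, mul_comm _ α, hα, one_mul]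

lemma ndet_map {R S : Type*} [CommRing R] [Ring S] (f : R →+* S) {n : ℕ}
    (N : Matrix (Fin n) (Fin n) R) : ndet (N.map f) = f N.det := by
  rw [ndet, Matrix.det_apply', map_sum]
  refine Finset.sum_congr rfl fun σ _ => ?_
  rw [zsmul_eq_mul, map_mul, map_intCast, ← List.prod_ofFn, ← List.prod_hom _ f, List.map_ofFn]
  rfl

section Supercommutative

variable {A : Type*} [Ring A] {m n o : Type*}

structure IsSupercommutative (E : Subring A) (O : AddSubgroup A) : Prop where
  even_le_center : E ≤ Subring.center A
  odd_mul_odd_mem {u v : A} : u ∈ O → v ∈ O → u * v ∈ E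
  even_mul_odd_mem {e u : A} : e ∈ E → u ∈ O → e * u ∈ O
  odd_anticomm {u v : A} : u ∈ O → v ∈ O → u * v = -(v * u)
  odd_mul_self {u : A} : u ∈ O → u * u = 0

/-- `X Y` and `Y X` have central entries; `P` and `Q` are these matrices read in the
commutative ring `Subring.center A`, where determinants make sense. -/
def FermionicDuality (O : AddSubgroup A) (m n : Type*) [Fintype m] [DecidableEq m] [Fintype n]
    [DecidableEq n] : Prop :=
  ∀ (X : Matrix m n A) (Y : Matrix n m A), (∀ i j, X i j ∈ O) → (∀ i j, Y i j ∈ O) →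
    ∀ (P : Matrix m m (Subring.center A)) (Q : Matrix n n (Subring.center A)),
      P.map (Subring.center A).subtype = X * Y → Q.map (Subring.center A).subtype = Y * X →
        (1 - P).det * (1 - Q).det = 1

namespace IsSupercommutative

variable {E : Subring A} {O : AddSubgroup A} {p : Type*} [Fintype n]

lemma mul_apply_mem_even (h : IsSupercommutative E O) {X : Matrix m n A} {Y : Matrix n p A}
    (hX : ∀ i j, X i j ∈ O) (hY : ∀ i j, Y i j ∈ O) (i : m) (k : p) : (X * Y) i k ∈ E :=
  sum_mem fun j _ => h.odd_mul_odd_mem (hX i j) (hY j k)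

lemma mul_apply_mem_odd (h : IsSupercommutative E O) {X : Matrix m n A} {Y : Matrix n p A}
    (hX : ∀ i j, X i j ∈ E) (hY : ∀ i j, Y i j ∈ O) (i : m) (k : p) : (X * Y) i k ∈ O :=
  sum_mem fun j _ => h.even_mul_odd_mem (hX i j) (hY j k)

lemma exists_map_eq_mul (h : IsSupercommutative E O) {X : Matrix m n A} {Y : Matrix n p A}
    (hX : ∀ i j, X i j ∈ O) (hY : ∀ i j, Y i j ∈ O) :
    ∃ P : Matrix m p (Subring.center A), P.map (Subring.center A).subtype = X * Y :=
  ⟨of fun i k => ⟨(X * Y) i k, h.even_le_center (h.mul_apply_mem_even hX hY i k)⟩, rfl⟩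

lemma odd_mul_odd_mul_self (h : IsSupercommutative E O) {u v : A} (hu : u ∈ O) (hv : v ∈ O) :
    u * v * (u * v) = 0 := by
  rw [← mul_assoc, mul_assoc u, h.odd_anticomm hv hu, mul_neg, neg_mul, ← mul_assoc,
    h.odd_mul_self hu, zero_mul, zero_mul, neg_zero]

lemma exists_mul_one_sub_eq_one [Fintype o] [DecidableEq o] [Unique o]
    (h : IsSupercommutative E O) {y : Matrix o n A} {x : Matrix n o A} (hy : ∀ i j, y i j ∈ O)
    (hx : ∀ i j, x i j ∈ O) :
    ∃ s α : Subring.center A, (α : A) ∈ E ∧ y * x = s • 1 ∧ α * (1 - s) = 1 := by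
  have hsE := h.mul_apply_mem_even hy hx default default
  have hnil : IsNilpotent ((y * x) default default) := by
    refine Commute.isNilpotent_sum (fun j _ => ⟨2, ?_⟩) fun j k _ _ => ?_
    · rw [sq, h.odd_mul_odd_mul_self (hy _ j) (hx j _)]
    · exact Subring.mem_center_iff.mp (h.even_le_center (h.odd_mul_odd_mem (hy _ k) (hx k _))) _
  obtain ⟨α, hα⟩ := ((IsNilpotent.map_iff (r := ⟨_, hsE⟩) (f := E.subtype)
    Subtype.val_injective).mp hnil).isUnit_one_sub.exists_left_inv
  refine ⟨⟨_, h.even_le_center hsE⟩, ⟨α, h.even_le_center α.2⟩, α.2, ?_,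
    Subtype.ext (congrArg Subtype.val hα :)⟩
  ext i j
  rw [Subsingleton.elim i default, Subsingleton.elim j default, Matrix.smul_apply, one_apply_eq,
    Algebra.smul_def, mul_one]
  rfl

end IsSupercommutative

section CenterLift

lemma map_centerSubtype_injective :
    Function.Injective fun P : Matrix m n (Subring.center A) => P.map (Subring.center A).subtype :=
  Matrix.map_injective Subtype.val_injective

lemma map_centerSubtype_sub (P Q : Matrix m n (Subring.center A)) :
    (P - Q).map (Subring.center A).subtype =
      P.map (Subring.center A).subtype - Q.map (Subring.center A).subtype :=
  Matrix.map_sub _ (map_sub _) P Q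

lemma map_centerSubtype_smul (α : Subring.center A) (P : Matrix m n (Subring.center A)) :
    (α • P).map (Subring.center A).subtype = α • P.map (Subring.center A).subtype :=
  Matrix.map_smul (Subring.center A).subtype α (fun _ => rfl) P

lemma map_centerSubtype_one [DecidableEq m] :
    (1 : Matrix m m (Subring.center A)).map (Subring.center A).subtype = 1 :=
  Matrix.map_one _ (map_zero _) (map_one _)

variable [Fintype m] [Fintype n] [Fintype o] [DecidableEq o]
  {X₁ : Matrix m n A} {x : Matrix m o A} {Y₁ : Matrix n m A} {y : Matrix o m A}
  {α s : Subring.center A}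

lemma det_one_sub_fromRows_mul_fromCols [DecidableEq n] [Unique o]
    {Q : Matrix (n ⊕ o) (n ⊕ o) (Subring.center A)} {Q₂ : Matrix n n (Subring.center A)}
    (hQ : Q.map (Subring.center A).subtype = fromRows Y₁ y * fromCols X₁ x)
    (hQ₂ : Q₂.map (Subring.center A).subtype = Y₁ * (X₁ + α • (x * y * X₁)))
    (hyx : y * x = s • 1) (hα : α * (1 - s) = 1) :
    (1 - Q).det * α = (1 - Q₂).det := by
  obtain ⟨B₁₁, B₁₂, B₂₁, B₂₂, rfl⟩ : ∃ a b c d, Q = fromBlocks a b c d :=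
    ⟨_, _, _, _, (fromBlocks_toBlocks Q).symm⟩
  rw [fromRows_mul_fromCols, fromBlocks_map, fromBlocks_inj, hyx] at hQ
  obtain ⟨h₁₁, h₁₂, h₂₁, h₂₂⟩ := hQ
  have hB₂₂ : B₂₂ = s • 1 := map_centerSubtype_injective <| by
    dsimp only
    rw [h₂₂, map_centerSubtype_smul, map_centerSubtype_one]
  have hblocks : 1 - fromBlocks B₁₁ B₁₂ B₂₁ B₂₂ = fromBlocks (1 - B₁₁) (-B₁₂) (-B₂₁) (1 - B₂₂) := by
    rw [← fromBlocks_one, sub_eq_add_neg, fromBlocks_neg, fromBlocks_add]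
    simp only [zero_sub, ← sub_eq_add_neg]
  rw [hblocks, det_fromBlocks_mul_eq_det_sub_smul _ _ _ _ (by simpa [hB₂₂] using hα)]
  congr 1
  refine map_centerSubtype_injective ?_
  dsimp only
  simp only [map_centerSubtype_sub, map_centerSubtype_smul, Matrix.map_mul, map_centerSubtype_one,
    h₁₁, h₁₂, h₂₁, hQ₂, Matrix.neg_mul, Matrix.mul_neg, neg_neg, Matrix.mul_add, Matrix.mul_smul,
    Matrix.mul_assoc]
  abel

lemma one_sub_mul_one_sub_fromCols_mul_fromRows [DecidableEq m]
    {P P₂ P₃ : Matrix m m (Subring.center A)}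
    (hP : P.map (Subring.center A).subtype = fromCols X₁ x * fromRows Y₁ y)
    (hP₂ : P₂.map (Subring.center A).subtype = (X₁ + α • (x * y * X₁)) * Y₁)
    (hP₃ : P₃.map (Subring.center A).subtype = -(α • x) * y)
    (hyx : y * x = s • 1) (hα : α * (1 - s) = 1) :
    (1 - P₃) * (1 - P) = 1 - P₂ := by
  refine map_centerSubtype_injective ?_
  dsimp only
  have hc : x * y * (x * y) = s • (x * y) := by
    rw [Matrix.mul_assoc, ← Matrix.mul_assoc y, hyx, Matrix.smul_mul, Matrix.one_mul,
      Matrix.mul_smul]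
  simp only [Matrix.map_mul, map_centerSubtype_sub, map_centerSubtype_one, hP, hP₂, hP₃]
  rw [fromCols_mul_fromRows, Matrix.neg_mul, sub_neg_eq_add, Matrix.smul_mul,
    one_add_smul_mul_one_sub_add hc hα, Matrix.add_mul, Matrix.smul_mul, Matrix.mul_assoc (x * y)]

lemma det_one_sub_eq_of_unique [Unique o] {Q : Matrix o o (Subring.center A)}
    (hQ : Q.map (Subring.center A).subtype = y * -(α • x))
    (hyx : y * x = s • 1) (hα : α * (1 - s) = 1) :
    (1 - Q).det = α := by
  have hQ' : Q = -(α * s) • 1 := map_centerSubtype_injective <| by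
    dsimp only
    rw [hQ, map_centerSubtype_smul, map_centerSubtype_one, Matrix.mul_neg, Matrix.mul_smul, hyx,
      smul_smul, neg_smul]
  rw [det_unique, hQ', Matrix.sub_apply, Matrix.smul_apply, one_apply_eq, smul_eq_mul, mul_one]
  linear_combination -hα

end CenterLift

namespace FermionicDuality

variable {E : Subring A} {O : AddSubgroup A} {n' : Type*} [Fintype m] [DecidableEq m]
  [Fintype n] [DecidableEq n] [Fintype n'] [DecidableEq n'] [Fintype o] [DecidableEq o]

lemma symm (hd : FermionicDuality O m n) : FermionicDuality O n m :=
  fun X Y hX hY P Q hP hQ => by rw [mul_comm]; exact hd Y X hY hX Q P hQ hP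

lemma of_equiv (e : n ≃ n') (hd : FermionicDuality O m n) : FermionicDuality O m n' := by
  intro X Y hX hY P Q hP hQ
  have key := hd (X.submatrix id e) (Y.submatrix e id) (fun _ _ => hX _ _) (fun _ _ => hY _ _)
    P (Q.submatrix e e) (by rw [hP, submatrix_mul_equiv, submatrix_id_id])
    (by rw [← submatrix_map, hQ, ← submatrix_mul_equiv _ _ _ (Equiv.refl m)]; rfl)
  have hsub : 1 - Q.submatrix e e = (1 - Q).submatrix e e := by
    rw [submatrix_sub, Pi.sub_apply, Pi.sub_apply, submatrix_one_equiv]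
  rwa [hsub, det_submatrix_equiv_self] at key

lemma of_isEmpty [IsEmpty n] : FermionicDuality O m n := by
  intro X Y _ _ P Q hP _
  have hP0 : P = 0 := map_centerSubtype_injective <| by
    dsimp only
    rw [hP]
    ext i j
    simp [Matrix.mul_apply]
  rw [hP0, sub_zero, det_one, det_isEmpty, mul_one]

lemma of_unique (h : IsSupercommutative E O) [Unique m] [Unique n] : FermionicDuality O m n := by
  intro X Y hX hY P Q hP hQ
  have hp : (P default default : A) = X default default * Y default default := by
    simpa [Matrix.mul_apply] using congrFun₂ hP default default
  have hq : (Q default default : A) = Y default default * X default default := by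
    simpa [Matrix.mul_apply] using congrFun₂ hQ default default
  have hpq : P default default = -Q default default :=
    Subtype.ext <| by rw [hp, NegMemClass.coe_neg, hq, h.odd_anticomm (hX _ _) (hY _ _)]
  have hqq : Q default default * Q default default = 0 :=
    Subtype.ext <| by rw [Subring.coe_mul, hq, h.odd_mul_odd_mul_self (hY _ _) (hX _ _)]; rfl
  rw [det_unique, det_unique, Matrix.sub_apply, Matrix.sub_apply, one_apply_eq, one_apply_eq, hpq]
  linear_combination -hqq

theorem sum_unique (h : IsSupercommutative E O) [Unique o] (hmn : FermionicDuality O m n)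
    (hmo : FermionicDuality O m o) : FermionicDuality O m (n ⊕ o) := by
  intro X Y hX hY P Q hP hQ
  obtain ⟨X₁, x, rfl⟩ : ∃ X₁ x, X = fromCols X₁ x := ⟨_, _, (fromCols_toCols X).symm⟩
  obtain ⟨Y₁, y, rfl⟩ : ∃ Y₁ y, Y = fromRows Y₁ y := ⟨_, _, (fromRows_toRows Y).symm⟩
  have hX₁ : ∀ i j, X₁ i j ∈ O := fun i j => hX i (.inl j)
  have hx : ∀ i j, x i j ∈ O := fun i j => hX i (.inr j)
  have hY₁ : ∀ i j, Y₁ i j ∈ O := fun i j => hY (.inl i) j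
  have hy : ∀ i j, y i j ∈ O := fun i j => hY (.inr i) j
  obtain ⟨s, α, hαE, hyx, hα⟩ := h.exists_mul_one_sub_eq_one hy hx
  have hX₂ : ∀ i j, (X₁ + α • (x * y * X₁)) i j ∈ O := fun i j =>
    add_mem (hX₁ i j) (h.even_mul_odd_mem hαE
      (h.mul_apply_mem_odd (h.mul_apply_mem_even hx hy) hX₁ i j))
  have hx' : ∀ i j, (-(α • x)) i j ∈ O := fun i j => neg_mem (h.even_mul_odd_mem hαE (hx i j))
  obtain ⟨P₂, hP₂⟩ := h.exists_map_eq_mul hX₂ hY₁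
  obtain ⟨Q₂, hQ₂⟩ := h.exists_map_eq_mul hY₁ hX₂
  obtain ⟨P₃, hP₃⟩ := h.exists_map_eq_mul hx' hy
  obtain ⟨Q₃, hQ₃⟩ := h.exists_map_eq_mul hy hx'
  calc (1 - P).det * (1 - Q).det
      = ((1 - P₃).det * (1 - Q₃).det) * ((1 - P).det * (1 - Q).det) := by
        rw [hmo _ _ hx' hy P₃ Q₃ hP₃ hQ₃, one_mul]
    _ = ((1 - P₃) * (1 - P)).det * ((1 - Q).det * α) := by
        rw [det_one_sub_eq_of_unique hQ₃ hyx hα, det_mul]; ring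
    _ = (1 - P₂).det * (1 - Q₂).det := by
        rw [one_sub_mul_one_sub_fromCols_mul_fromRows hP hP₂ hP₃ hyx hα,
          det_one_sub_fromRows_mul_fromCols hQ hQ₂ hyx hα]
    _ = 1 := hmn _ _ hX₂ hY₁ P₂ Q₂ hP₂ hQ₂

end FermionicDuality

theorem IsSupercommutative.fermionicDuality {E : Subring A} {O : AddSubgroup A}
    (h : IsSupercommutative E O) (m n : Type*) [Fintype m] [DecidableEq m] [Fintype n]
    [DecidableEq n] : FermionicDuality O m n := by
  have row : ∀ k : ℕ, FermionicDuality O (Fin 1) (Fin k) := by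
    intro k
    induction k with
    | zero => exact .of_isEmpty
    | succ k ih => exact (ih.sum_unique h (.of_unique h)).of_equiv finSumFinEquiv
  have fin : ∀ p k : ℕ, FermionicDuality O (Fin p) (Fin k) := by
    intro p k
    induction k with
    | zero => exact .of_isEmpty
    | succ k ih => exact (ih.sum_unique h (row p).symm).of_equiv finSumFinEquiv
  exact ((fin _ _).of_equiv (Fintype.equivFin m).symm).symm.of_equiv (Fintype.equivFin n).symm

end Supercommutative

namespace ExteriorAlgebra

variable {R M : Type*} [CommRing R] [AddCommGroup M] [Module R M]

lemma ι_mul_ι_anticomm (u v : M) : ι R u * ι R v = -(ι R v * ι R u) :=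
  eq_neg_of_add_eq_zero_left (ι_add_mul_swap u v)

lemma ι_mul_comm_of_mem_even {e : ExteriorAlgebra R M} (he : e ∈ evenOdd (0 : QuadraticForm R M) 0)
    (v : M) : ι R v * e = e * ι R v := by
  induction e, he using even_induction with
  | algebraMap r => exact (Algebra.commutes r _).symm
  | add x y _ _ hx hy => rw [mul_add, add_mul, hx, hy]
  | ι_mul_ι_mul m₁ m₂ x _ hx =>
    change ι R v * (ι R m₁ * ι R m₂ * x) = ι R m₁ * ι R m₂ * x * ι R v
    calc ι R v * (ι R m₁ * ι R m₂ * x) = ι R v * ι R m₁ * ι R m₂ * x := by simp only [mul_assoc]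
      _ = ι R m₁ * ι R m₂ * (ι R v * x) := by
        rw [ι_mul_ι_anticomm v m₁, neg_mul, mul_assoc (ι R m₁), ι_mul_ι_anticomm v m₂]
        simp only [mul_assoc, mul_neg, neg_neg]
      _ = ι R m₁ * ι R m₂ * x * ι R v := by rw [hx]; simp only [mul_assoc]

lemma mem_center_of_mem_even {e : ExteriorAlgebra R M}
    (he : e ∈ evenOdd (0 : QuadraticForm R M) 0) : e ∈ Subring.center (ExteriorAlgebra R M) := by
  refine Subring.mem_center_iff.mpr fun g => ?_
  induction g using ExteriorAlgebra.induction with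
  | algebraMap r => exact Algebra.commutes r e
  | ι v => exact ι_mul_comm_of_mem_even he v
  | mul a b ha hb => rw [mul_assoc, hb, ← mul_assoc, ha, mul_assoc]
  | add a b ha hb => rw [add_mul, mul_add, ha, hb]

lemma mul_anticomm_of_mem_odd {w : ExteriorAlgebra R M} (hw : ∀ v, ι R v * w = -(w * ι R v))
    {u : ExteriorAlgebra R M} (hu : u ∈ evenOdd (0 : QuadraticForm R M) 1) : u * w = -(w * u) := by
  induction u, hu using odd_induction with
  | ι v => exact hw v
  | add x y _ _ hx hy => rw [add_mul, mul_add, hx, hy, neg_add]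
  | ι_mul_ι_mul m₁ m₂ x _ hx =>
    have hc := Subring.mem_center_iff.mp
      (mem_center_of_mem_even (ι_mul_ι_mem_evenOdd_zero (0 : QuadraticForm R M) m₁ m₂)) w
    change ι R m₁ * ι R m₂ * x * w = -(w * (ι R m₁ * ι R m₂ * x))
    rw [mul_assoc, hx, mul_neg, ← mul_assoc, ← hc]
    simp only [mul_assoc]

lemma odd_anticomm {u v : ExteriorAlgebra R M} (hu : u ∈ evenOdd (0 : QuadraticForm R M) 1)
    (hv : v ∈ evenOdd (0 : QuadraticForm R M) 1) : u * v = -(v * u) :=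
  mul_anticomm_of_mem_odd (fun m => by
    rw [mul_anticomm_of_mem_odd (fun m' => ι_mul_ι_anticomm m' m) hv, neg_neg]) hu

lemma odd_mul_self {u : ExteriorAlgebra R M} (hu : u ∈ evenOdd (0 : QuadraticForm R M) 1) :
    u * u = 0 := by
  induction u, hu using odd_induction with
  | ι v => exact ι_sq_zero v
  | add x y hx' hy' hx hy =>
    rw [add_mul, mul_add, mul_add, hx, hy, odd_anticomm hx' hy', zero_add, add_zero, neg_add_cancel]
  | ι_mul_ι_mul m₁ m₂ x _ hx =>
    have hc := Subring.mem_center_iff.mp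
      (mem_center_of_mem_even (ι_mul_ι_mem_evenOdd_zero (0 : QuadraticForm R M) m₁ m₂))
    change ι R m₁ * ι R m₂ * x * (ι R m₁ * ι R m₂ * x) = 0
    rw [mul_assoc, ← mul_assoc x, hc x, mul_assoc _ x x, hx, mul_zero, mul_zero]

theorem isSupercommutative :
    IsSupercommutative (even (0 : QuadraticForm R M)).toSubring
      (evenOdd (0 : QuadraticForm R M) 1).toAddSubgroup where
  even_le_center _ he := mem_center_of_mem_even he
  odd_mul_odd_mem hu hv := (SetLike.mul_mem_graded hu hv : _ ∈ evenOdd _ (1 + 1))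
  even_mul_odd_mem he hu := (SetLike.mul_mem_graded (A := evenOdd (0 : QuadraticForm R M)) he hu :
    _ ∈ evenOdd _ (0 + 1))
  odd_anticomm := odd_anticomm
  odd_mul_self := odd_mul_self

end ExteriorAlgebra

lemma of_algebraMap_sub_sum_eq_diagonal_mul {K A m n : Type*} [Field K] [Ring A] [Algebra K A]
    [Fintype m] [DecidableEq m] [Fintype n] (r : m → K) (hr : ∀ a, r a ≠ 0) (s : n → K)
    (U V : m → n → A) :
    (of fun a b => algebraMap K A (r a * if a = b then 1 else 0) -
        ∑ i, U a i * V b i * algebraMap K A (s i)) =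
      diagonal (algebraMap K A ∘ r) *
        (1 - of (fun a i => (r a)⁻¹ • U a i) * of (fun i b => s i • V b i)) := by
  ext a b
  rw [of_apply, diagonal_mul, Matrix.sub_apply, mul_sub, Matrix.mul_apply, Finset.mul_sum, map_mul,
    one_apply, apply_ite (algebraMap K A), map_one, map_zero]
  congr 1
  refine Finset.sum_congr rfl fun i _ => ?_
  rw [of_apply, of_apply, Function.comp_apply, smul_mul_smul_comm, ← Algebra.smul_def, smul_smul,
    ← mul_assoc, mul_inv_cancel₀ (hr a), one_mul, Algebra.smul_def, Algebra.commutes]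

lemma ndet_diagonal_mul_one_sub {K A : Type*} [CommRing K] [Ring A] [Algebra K A] {k : ℕ}
    (d : Fin k → K) (P : Matrix (Fin k) (Fin k) (Subring.center A)) :
    ndet (diagonal (algebraMap K A ∘ d) * (1 - P.map (Subring.center A).subtype)) =
      algebraMap K A (∏ i, d i) * ((1 - P).det : A) := by
  let κ : K →+* Subring.center A :=
    (algebraMap K A).codRestrict _ fun r => Set.algebraMap_mem_center r
  have hlift : diagonal (algebraMap K A ∘ d) * (1 - P.map (Subring.center A).subtype) =
      (diagonal (κ ∘ d) * (1 - P)).map (Subring.center A).subtype := by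
    rw [Matrix.map_mul, diagonal_map (map_zero _), map_centerSubtype_sub, map_centerSubtype_one]
    rfl
  rw [hlift, ndet_map, det_mul, det_diagonal, map_mul, Subring.coe_subtype]
  simp only [Function.comp_apply, ← map_prod]
  rfl

lemma algebraMap_X_sub_C_ne_zero (k : Fin 2) (w : ℂ) :
    algebraMap (MvPolynomial (Fin 2) ℂ) K15 (MvPolynomial.X k - MvPolynomial.C w) ≠ 0 := by
  refine (map_ne_zero_iff _ (IsFractionRing.injective _ _)).mpr fun h => ?_
  simpa using congrArg (MvPolynomial.eval fun _ => w + 1) h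

theorem stmt15_general (M N : ℕ) (zi : Fin N → ℂ) (la : Fin M → ℂ) :
    ndet (Matrix.of fun a b : Fin M =>
        algebraMap K15 (Gr M N) ((l15 - c15 (la a)) * (if a = b then 1 else 0)) -
          ∑ i, (πg M N a i * ψg M N b i) * algebraMap K15 (Gr M N) (z15 - c15 (zi i))⁻¹) *
    ndet (Matrix.of fun i j : Fin N =>
        algebraMap K15 (Gr M N) ((z15 - c15 (zi i)) * (if i = j then 1 else 0)) -
          ∑ a, (ψg M N a i * πg M N a j) * algebraMap K15 (Gr M N) (l15 - c15 (la a))⁻¹) =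
    algebraMap K15 (Gr M N)
      ((∏ i, (z15 - c15 (zi i))) * ∏ a, (l15 - c15 (la a))) := by
  set dl : Fin M → K15 := fun a => l15 - c15 (la a)
  set dz : Fin N → K15 := fun i => z15 - c15 (zi i)
  have hdl : ∀ a, dl a ≠ 0 := fun a => by
    simpa [dl, l15, c15] using algebraMap_X_sub_C_ne_zero 1 (la a)
  have hdz : ∀ i, dz i ≠ 0 := fun i => by
    simpa [dz, z15, c15] using algebraMap_X_sub_C_ne_zero 0 (zi i)
  rw [of_algebraMap_sub_sum_eq_diagonal_mul dl hdl (fun i => (dz i)⁻¹) (πg M N) (ψg M N),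
    of_algebraMap_sub_sum_eq_diagonal_mul dz hdz (fun a => (dl a)⁻¹) (fun i a => ψg M N a i)
      (fun j a => πg M N a j)]
  set X : Matrix (Fin M) (Fin N) (Gr M N) := of fun a i => (dl a)⁻¹ • πg M N a i
  set Y : Matrix (Fin N) (Fin M) (Gr M N) := of fun i b => (dz i)⁻¹ • ψg M N b i
  have h := ExteriorAlgebra.isSupercommutative (R := K15) (M := (Bool × Fin M × Fin N) →₀ K15)
  have hX : ∀ a i, X a i ∈ (evenOdd (0 : QuadraticForm K15 _) 1).toAddSubgroup :=
    fun _ _ => Submodule.smul_mem _ _ (ι_mem_evenOdd_one _ _)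
  have hY : ∀ i b, Y i b ∈ (evenOdd (0 : QuadraticForm K15 _) 1).toAddSubgroup :=
    fun _ _ => Submodule.smul_mem _ _ (ι_mem_evenOdd_one _ _)
  obtain ⟨P, hP⟩ := h.exists_map_eq_mul hX hY
  obtain ⟨Q, hQ⟩ := h.exists_map_eq_mul hY hX
  have hdual := h.fermionicDuality (Fin M) (Fin N) X Y hX hY P Q hP hQ
  rw [← hP, ← hQ, ndet_diagonal_mul_one_sub, ndet_diagonal_mul_one_sub, mul_assoc,
    ← mul_assoc ((1 - P).det : Gr M N), ← Algebra.commutes, mul_assoc, ← Subring.coe_mul, hdual,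
    Subring.coe_one, mul_one, ← map_mul, mul_comm]

/-- Fermionic `(𝔤𝔩_M, 𝔤𝔩_N)`-duality with regular singularities:
`det((λ-λ_a)δ_{ab} - ∑_i π^a_i ψ^b_i/(z-z_i)) · det((z-z_i)δ_{ij} - ∑_a ψ^a_i π^a_j/(λ-λ_a))
  = ∏_i (z-z_i) · ∏_a (λ-λ_a)`. -/
theorem stmt15 (M N : ℕ) (zi : Fin N → ℂ) (la : Fin M → ℂ)
    (hz : Function.Injective zi) (hl : Function.Injective la) :
    ndet (Matrix.of fun a b : Fin M =>
        algebraMap K15 (Gr M N) ((l15 - c15 (la a)) * (if a = b then 1 else 0)) -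
          ∑ i, (πg M N a i * ψg M N b i) * algebraMap K15 (Gr M N) (z15 - c15 (zi i))⁻¹) *
    ndet (Matrix.of fun i j : Fin N =>
        algebraMap K15 (Gr M N) ((z15 - c15 (zi i)) * (if i = j then 1 else 0)) -
          ∑ a, (ψg M N a i * πg M N a j) * algebraMap K15 (Gr M N) (l15 - c15 (la a))⁻¹) =
    algebraMap K15 (Gr M N)
      ((∏ i, (z15 - c15 (zi i))) * ∏ a, (l15 - c15 (la a))) :=
  stmt15_general M N zi la
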